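/- For σ, w ∈ S_n, the set I(σ)w = {uw : u ∈ S_n, u ≤ σ} has a unique maximal element with respect to the Bruhat order, and max(I(σ)w) = σ * w, where * is the Demazure product. -/

import Mathlib

/-!
The subword definition of the Bruhat order agrees with the chain order generated by the steps
`x ⟶ t x`, `t` a transposition, that raise the length by one: the strong exchange property turns a
chain into a subword of any given reduced word, and the lifting property
`u ≤ w → s u ≤ max {w, s w}`, proved by induction along chains, turns a subword into a chain.
Hence the subword property holds for every reduced word, so for a reduced product `σ = s σ'`
one has `I(σ) = I(σ') ∪ s I(σ')`, and by lifting the greatest element of `I(σ) I(w)` is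
`max {G, s G}` where `G = u₀ w` is the greatest element of `I(σ') I(w)`. By induction on a reduced
word of `σ`, `I(σ) I(w)` thus has a greatest element of the form `u₀ w` with `u₀ ≤ σ`; it is
`σ * w` by definition, and it is also the greatest element of `I(σ) w`.
-/


open scoped Classical

namespace KK

/-- The simple transposition `s_j = (j, j+1)` in `S_n` (1-indexed letters `1 ≤ j ≤ n-1`);
junk value `1` out of range. -/
def simpleRefl (n : ℕ) (j : ℕ) : Equiv.Perm (Fin n) :=
  if h : 1 ≤ j ∧ j ≤ n - 1 then
    Equiv.swap ⟨j - 1, by omega⟩ ⟨j, by omega⟩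
  else 1

/-- The permutation represented by a word in the simple transpositions. -/
def wordProd (n : ℕ) (l : List ℕ) : Equiv.Perm (Fin n) :=
  (l.map (simpleRefl n)).prod

/-- Coxeter length: minimal length of a word in simple transpositions representing `w`. -/
noncomputable def len (n : ℕ) (w : Equiv.Perm (Fin n)) : ℕ :=
  sInf {k | ∃ l : List ℕ, (∀ j ∈ l, 1 ≤ j ∧ j ≤ n - 1) ∧ l.length = k ∧ wordProd n l = w}

/-- A word is reduced if its letters are genuine simple-transposition indices and its
length equals the Coxeter length of the permutation it represents. -/
def IsReduced (n : ℕ) (l : List ℕ) : Prop :=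
  (∀ j ∈ l, 1 ≤ j ∧ j ≤ n - 1) ∧ len n (wordProd n l) = l.length

/-- Bruhat order on `S_n`: `u ≤ w` iff some reduced word for `w` contains a reduced word
for `u` as a subword. -/
def bruhatLE (n : ℕ) (u w : Equiv.Perm (Fin n)) : Prop :=
  ∃ l l' : List ℕ, IsReduced n l ∧ wordProd n l = w ∧
    l'.Sublist l ∧ IsReduced n l' ∧ wordProd n l' = u

/-- `m` is the greatest element of `K` in the Bruhat order (hence the unique maximal one). -/
def IsBruhatGreatest (n : ℕ) (K : Set (Equiv.Perm (Fin n))) (m : Equiv.Perm (Fin n)) : Prop :=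
  m ∈ K ∧ ∀ u ∈ K, bruhatLE n u m

/-- `m` is the least element of `K` in the Bruhat order (hence the unique minimal one). -/
def IsBruhatLeast (n : ℕ) (K : Set (Equiv.Perm (Fin n))) (m : Equiv.Perm (Fin n)) : Prop :=
  m ∈ K ∧ ∀ u ∈ K, bruhatLE n m u

/-- One step of the Demazure product: `w * s_j = max {w, w s_j}` in the Bruhat order. -/
noncomputable def demStep (n : ℕ) (w : Equiv.Perm (Fin n)) (j : ℕ) : Equiv.Perm (Fin n) :=
  if len n w < len n (w * simpleRefl n j) then w * simpleRefl n j else w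

/-- The Demazure product `*(w)` of a (not necessarily reduced) word. -/
noncomputable def demProd (n : ℕ) (l : List ℕ) : Equiv.Perm (Fin n) :=
  l.foldl (demStep n) 1

/-- The binary Demazure product of two permutations, `w * w' = max I(w)I(w')`. -/
noncomputable def demMul (n : ℕ) (w w' : Equiv.Perm (Fin n)) : Equiv.Perm (Fin n) :=
  if h : ∃ m, IsBruhatGreatest n
      {x | ∃ u v, bruhatLE n u w ∧ bruhatLE n v w' ∧ x = u * v} m
  then h.choose else 1

/-- The longest element `w₀` of `S_n`. -/
def w0 (n : ℕ) : Equiv.Perm (Fin n) := Fin.revPerm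



/-- `μ` is a partition with `n` nonnegative integer parts `μ 1 ≥ ⋯ ≥ μ n ≥ 0`. -/
def IsPartition (n : ℕ) (μ : ℕ → ℤ) : Prop :=
  (∀ i, 1 ≤ i → i < n → μ (i + 1) ≤ μ i) ∧ 0 ≤ μ n

/-- `(i, j)` indexes an entry strictly below the top in the triangular array:
`n ≥ i > j ≥ 1`. -/
def inTriangle (n : ℕ) (p : ℕ × ℕ) : Prop := 1 ≤ p.2 ∧ p.2 < p.1 ∧ p.1 ≤ n

/-- A Gelfand–Tsetlin pattern of size `n`, encoded as a function `a : ℕ → ℕ → ℝ`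
(value `a i j` for `n ≥ i ≥ j ≥ 1`, and `0` outside the triangle). -/
def IsGTArray (n : ℕ) (a : ℕ → ℕ → ℝ) : Prop :=
  (∀ i j, 1 ≤ j → j < i → i ≤ n →
      0 ≤ a i j - a (i - 1) j ∧ 0 ≤ a (i - 1) j - a i (j + 1)) ∧
  (∀ i j, j = 0 ∨ i < j ∨ n < i → a i j = 0)

/-- The Gelfand–Tsetlin polytope `GT(μ)`: GT patterns of size `n` with bottom row `μ`. -/
def GTset (n : ℕ) (μ : ℕ → ℤ) : Set (ℕ → ℕ → ℝ) :=
  {a | IsGTArray n a ∧ ∀ j, 1 ≤ j → j ≤ n → a n j = (μ j : ℝ)}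

/-- The integral points `GT_ℤ(μ)` of the Gelfand–Tsetlin polytope. -/
def GTZ (n : ℕ) (μ : ℕ → ℤ) : Set (ℕ → ℕ → ℝ) :=
  {a ∈ GTset n μ | ∀ i j, ∃ m : ℤ, a i j = (m : ℝ)}

/-- The weight of a GT pattern: `wt a i = Σ_{j=1}^i a i j − Σ_{j=1}^{i-1} a (i-1) j`. -/
noncomputable def wt (a : ℕ → ℕ → ℝ) (i : ℕ) : ℝ :=
  (∑ j ∈ Finset.Icc 1 i, a i j) - ∑ j ∈ Finset.Icc 1 (i - 1), a (i - 1) j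

/-- The pairs `(i,j)` with `n ≥ i > j ≥ 1` in increasing lexicographic order. -/
def pairsLex (n : ℕ) : List (ℕ × ℕ) :=
  (List.range' 2 (n - 1)).flatMap fun i => (List.range' 1 (i - 1)).map fun j => (i, j)

/-- The pairs `(i,j)` with `n ≥ i > j ≥ 1` in increasing order for the total order in
which `(i,j)` precedes `(i',j')` iff `i < i'`, or `i = i'` and `j > j'`. -/
def pairsBar (n : ℕ) : List (ℕ × ℕ) :=
  (List.range' 2 (n - 1)).flatMap fun i => ((List.range' 1 (i - 1)).reverse).map fun j => (i, j)

/-- The pairs `(i,j)` with `n ≥ i > j ≥ 1` in decreasing order for the total order in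
which `(i,j)` precedes `(i',j')` iff `i < i'`, or `i = i'` and `j > j'`:
`i` descending and, within each `i`, `j` ascending. -/
def pairsFin (n : ℕ) : List (ℕ × ℕ) :=
  ((List.range' 2 (n - 1)).reverse).flatMap fun i => (List.range' 1 (i - 1)).map fun j => (i, j)

/-- The word `𝔣(P)`: list the pairs `(i,j)` with `a (i-1) j = a i (j+1)` in the order of
`pairsFin` and record the letter `j` for each. -/
noncomputable def fWord (n : ℕ) (a : ℕ → ℕ → ℝ) : List ℕ :=
  ((pairsFin n).filter fun p => a (p.1 - 1) p.2 = a p.1 (p.2 + 1)).map fun p => p.2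

/-- The word `𝔦(Q)`: list the pairs `(i,j)` with `b i j = b (i-1) j` in increasing
lexicographic order and record the letter `i - j` for each. -/
noncomputable def iWord (n : ℕ) (b : ℕ → ℕ → ℝ) : List ℕ :=
  ((pairsLex n).filter fun p => b p.1 p.2 = b (p.1 - 1) p.2).map fun p => p.1 - p.2



/-- The sequence `d_t`, `1 ≤ t ≤ i+1`, used to define the crystal operators `e_i, f_i`
(with the convention `a_{k,k+1} = 0` for `k ∈ {i-1, i}`). -/
noncomputable def dseq (a : ℕ → ℕ → ℝ) (i : ℕ) : ℕ → ℝ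
  | 0 => 0
  | 1 => a i 1 - a (i + 1) 1
  | (t + 2) => dseq a i (t + 1) + a i (t + 1) + (if t + 2 = i + 1 then 0 else a i (t + 2))
      - (if t + 1 = i then 0 else a (i - 1) (t + 1)) - a (i + 1) (t + 2)

/-- `d = min {d_1, …, d_{i+1}}`. -/
noncomputable def dmin (a : ℕ → ℕ → ℝ) (i : ℕ) : ℝ :=
  ((Finset.Icc 1 (i + 1)).image (dseq a i)).min'
    (Finset.Nonempty.image ⟨1, by simp⟩ _)

/-- `m`: the smallest index `t ∈ [1, i+1]` with `d_t = d`. -/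
noncomputable def mIdx (a : ℕ → ℕ → ℝ) (i : ℕ) : ℕ :=
  sInf {t | t ∈ Finset.Icc 1 (i + 1) ∧ dseq a i t = dmin a i}

/-- `M`: the largest index `t ∈ [1, i+1]` with `d_t = d`. -/
noncomputable def MIdx (a : ℕ → ℕ → ℝ) (i : ℕ) : ℕ :=
  sSup {t | t ∈ Finset.Icc 1 (i + 1) ∧ dseq a i t = dmin a i}

/-- The raising crystal operator `e_i` (`none` plays the role of `0`). -/
noncomputable def eOp (i : ℕ) (a : ℕ → ℕ → ℝ) : Option (ℕ → ℕ → ℝ) :=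
  if dmin a i = 0 then none
  else some fun i' j' => if i' = i ∧ j' = mIdx a i then a i' j' + 1 else a i' j'

/-- The lowering crystal operator `f_i` (`none` plays the role of `0`). -/
noncomputable def fOp (i : ℕ) (a : ℕ → ℕ → ℝ) : Option (ℕ → ℕ → ℝ) :=
  if MIdx a i = i + 1 then none
  else some fun i' j' => if i' = i ∧ j' = MIdx a i then a i' j' - 1 else a i' j'

/-- `m`-fold iteration of a partial operator. -/
noncomputable def iterOp (op : (ℕ → ℕ → ℝ) → Option (ℕ → ℕ → ℝ)) :
    ℕ → (ℕ → ℕ → ℝ) → Option (ℕ → ℕ → ℝ)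
  | 0 => fun x => some x
  | (m + 1) => fun x => (op x).bind (iterOp op m)

/-- Apply `op i₁ ^ m₁ ∘ ⋯ ∘ op i_k ^ m_k` to `x`, given the list `[(i₁,m₁),…,(i_k,m_k)]`
(the last pair acts first). -/
noncomputable def applyWord (op : ℕ → (ℕ → ℕ → ℝ) → Option (ℕ → ℕ → ℝ)) :
    List (ℕ × ℕ) → (ℕ → ℕ → ℝ) → Option (ℕ → ℕ → ℝ)
  | [] => fun x => some x
  | (p :: rest) => fun x => (applyWord op rest x).bind (iterOp (op p.1) p.2)

/-- The highest-weight element `G⁰_μ` of `GT_ℤ(μ)`: the element killed by every `e_i`. -/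
noncomputable def G0 (n : ℕ) (μ : ℕ → ℤ) : ℕ → ℕ → ℝ :=
  if h : ∃ P, P ∈ GTZ n μ ∧ ∀ i, 1 ≤ i → i ≤ n - 1 → eOp i P = none then h.choose else 0

/-- The lowest-weight element `G*_μ` of `GT_ℤ(μ)`: the element killed by every `f_i`. -/
noncomputable def Gstar (n : ℕ) (μ : ℕ → ℤ) : ℕ → ℕ → ℝ :=
  if h : ∃ P, P ∈ GTZ n μ ∧ ∀ i, 1 ≤ i → i ≤ n - 1 → fOp i P = none then h.choose else 0

/-- The Demazure crystal `D(μ, w)` computed from the reduced word `l` for `w`: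
`{f_{i₁}^{m₁} ⋯ f_{i_k}^{m_k}(G⁰_μ)} ∩ GT_ℤ(μ)`. -/
noncomputable def demCrystal (n : ℕ) (μ : ℕ → ℤ) (l : List ℕ) : Set (ℕ → ℕ → ℝ) :=
  {P | P ∈ GTZ n μ ∧
    ∃ ms : List ℕ, ms.length = l.length ∧ applyWord fOp (l.zip ms) (G0 n μ) = some P}

/-- The opposite Demazure crystal `D(μ, w)^op` computed from the reduced word `l`
for `w·w₀`: `{e_{j₁}^{m₁} ⋯ e_{j_t}^{m_t}(G*_μ)} ∩ GT_ℤ(μ)`. -/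
noncomputable def opDemCrystal (n : ℕ) (μ : ℕ → ℤ) (l : List ℕ) : Set (ℕ → ℕ → ℝ) :=
  {P | P ∈ GTZ n μ ∧
    ∃ ms : List ℕ, ms.length = l.length ∧ applyWord eOp (l.zip ms) (Gstar n μ) = some P}

/-- `σ(F)`: the product of `s_{i-j}` over `(i,j) ∈ F` in increasing lexicographic order. -/
noncomputable def sigmaF (n : ℕ) (F : Finset (ℕ × ℕ)) : Equiv.Perm (Fin n) :=
  wordProd n (((pairsLex n).filter fun p => p ∈ F).map fun p => p.1 - p.2)

/-- `σ̄(F)`: the product of `s_j` over `(i,j) ∈ F` in increasing order for the total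
order in which `(i,j)` precedes `(i',j')` iff `i < i'`, or `i = i'` and `j > j'`. -/
noncomputable def sigmaBarF (n : ℕ) (F : Finset (ℕ × ℕ)) : Equiv.Perm (Fin n) :=
  wordProd n (((pairsBar n).filter fun p => p ∈ F).map fun p => p.2)

/-- The Kogan face `K(μ, F)`: the face of `GT(μ)` cut out by `a i j = a (i-1) j`,
`(i,j) ∈ F`. -/
def KoganFace (n : ℕ) (μ : ℕ → ℤ) (F : Finset (ℕ × ℕ)) : Set (ℕ → ℕ → ℝ) :=
  {a ∈ GTset n μ | ∀ p ∈ F, a p.1 p.2 = a (p.1 - 1) p.2}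

/-- The dual Kogan face `K̄(μ, F)`: the face of `GT(μ)` cut out by
`a (i-1) j = a i (j+1)`, `(i,j) ∈ F`. -/
def dualKoganFace (n : ℕ) (μ : ℕ → ℤ) (F : Finset (ℕ × ℕ)) : Set (ℕ → ℕ → ℝ) :=
  {a ∈ GTset n μ | ∀ p ∈ F, a (p.1 - 1) p.2 = a p.1 (p.2 + 1)}

/-- The BiKogan face `K_{λ,μ}(F, F')` of `GT(λ) × GT(μ)`. -/
def biKoganFace (n : ℕ) (lam μ : ℕ → ℤ) (F F' : Finset (ℕ × ℕ)) :
    Set ((ℕ → ℕ → ℝ) × (ℕ → ℕ → ℝ)) :=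
  {PQ | PQ.1 ∈ GTset n lam ∧ PQ.2 ∈ GTset n μ ∧
    (∀ p ∈ F, PQ.1 (p.1 - 1) p.2 = PQ.1 p.1 (p.2 + 1)) ∧
    (∀ p ∈ F', PQ.2 p.1 p.2 = PQ.2 (p.1 - 1) p.2)}

/-- `ϖ(F, F') = σ̄(F)⁻¹ · σ(F')`. -/
noncomputable def biVarpi (n : ℕ) (F F' : Finset (ℕ × ℕ)) : Equiv.Perm (Fin n) :=
  (sigmaBarF n F)⁻¹ * sigmaF n F'

/-- The BiKogan face `K_{λ,μ}(F, F')` is reduced if `ℓ(ϖ(F,F')) = |F| + |F'|`. -/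
def biKoganReduced (n : ℕ) (F F' : Finset (ℕ × ℕ)) : Prop :=
  len n (biVarpi n F F') = F.card + F'.card


open Equiv

variable {n : ℕ}

abbrev IsSimpleIndex (n c : ℕ) : Prop := 1 ≤ c ∧ c ≤ n - 1

abbrev IsWord (n : ℕ) (l : List ℕ) : Prop := ∀ j ∈ l, IsSimpleIndex n j

@[simp] lemma wordProd_nil : wordProd n [] = 1 := rfl

@[simp] lemma wordProd_cons (c : ℕ) (l : List ℕ) :
    wordProd n (c :: l) = simpleRefl n c * wordProd n l := List.prod_cons

lemma wordProd_append (l m : List ℕ) : wordProd n (l ++ m) = wordProd n l * wordProd n m := by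
  simp [wordProd]

@[simp] lemma simpleRefl_mul_self (c : ℕ) : simpleRefl n c * simpleRefl n c = 1 := by
  unfold simpleRefl
  split <;> simp

@[simp] lemma simpleRefl_inv (c : ℕ) : (simpleRefl n c)⁻¹ = simpleRefl n c :=
  inv_eq_of_mul_eq_one_right (simpleRefl_mul_self c)

@[simp] lemma simpleRefl_mul_simpleRefl_mul (c : ℕ) (w : Perm (Fin n)) :
    simpleRefl n c * (simpleRefl n c * w) = w := by
  rw [← mul_assoc, simpleRefl_mul_self, one_mul]

lemma simpleRefl_of_not_isSimpleIndex {c : ℕ} (hc : ¬IsSimpleIndex n c) :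
    simpleRefl n c = 1 :=
  dif_neg hc

lemma exists_simpleRefl_eq_swap {c : ℕ} (hc : IsSimpleIndex n c) :
    ∃ e f : Fin n, (e : ℕ) + 1 = f ∧ simpleRefl n c = swap e f := by
  obtain ⟨h₁, h₂⟩ := hc
  exact ⟨⟨c - 1, by omega⟩, ⟨c, by omega⟩, by simp only; omega, dif_pos ⟨h₁, h₂⟩⟩

lemma exists_word (w : Perm (Fin n)) : ∃ l, IsWord n l ∧ wordProd n l = w := by
  cases n with
  | zero => exact ⟨[], nofun, Subsingleton.elim _ _⟩
  | succ m =>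
    have hw : w ∈ Submonoid.closure (Set.range fun i : Fin m ↦ swap i.castSucc i.succ) := by
      rw [Perm.mclosure_swap_castSucc_succ]; trivial
    induction hw using Submonoid.closure_induction with
    | mem _ hx =>
      obtain ⟨i, rfl⟩ := hx
      refine ⟨[i + 1], fun j hj => by rw [List.mem_singleton.1 hj]; omega, ?_⟩
      rw [wordProd_cons, wordProd_nil, mul_one, simpleRefl, dif_pos (by omega)]
      rfl
    | one => exact ⟨[], nofun, rfl⟩
    | mul _ _ _ _ hx hy =>
      obtain ⟨l, hl, rfl⟩ := hx
      obtain ⟨m, hm, rfl⟩ := hy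
      refine ⟨l ++ m, fun j hj => ?_, wordProd_append l m⟩
      rcases List.mem_append.1 hj with hj | hj
      exacts [hl j hj, hm j hj]

lemma len_le_length {l : List ℕ} (hl : IsWord n l) : len n (wordProd n l) ≤ l.length :=
  Nat.sInf_le ⟨l, hl, rfl, rfl⟩

lemma exists_isReduced (w : Perm (Fin n)) : ∃ l, IsReduced n l ∧ wordProd n l = w := by
  obtain ⟨l, hl, hwl⟩ := exists_word w
  obtain ⟨m, hm, hlen, hwm⟩ := Nat.sInf_mem
    (s := {k | ∃ l : List ℕ, IsWord n l ∧ l.length = k ∧ wordProd n l = w}) ⟨_, l, hl, rfl, hwl⟩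
  exact ⟨m, ⟨hm, by rw [hwm]; exact hlen.symm⟩, hwm⟩

lemma eq_of_lt_of_swap_adjacent_apply_lt {e f x y : Fin n} (hef : (e : ℕ) + 1 = f)
    (hxy : x < y) (h : swap e f y < swap e f x) : x = e ∧ y = f := by
  simp only [swap_apply_def] at h
  split_ifs at h <;> simp only [Fin.ext_iff, Fin.lt_def] at * <;> omega

lemma exists_swap_mul_eq_eraseIdx_of_inv_lt {a b : Fin n} (hab : a < b) {w : Perm (Fin n)}
    (hw : w⁻¹ b < w⁻¹ a) {l : List ℕ} (hl : IsWord n l) (hwl : wordProd n l = w) :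
    ∃ i < l.length, swap a b * w = wordProd n (l.eraseIdx i) := by
  -- `i + 1` is the first prefix length at which `a` and `b` are inverted; the prefix of length
  -- `i` then conjugates the letter `l[i]` to `swap a b`
  let p : ℕ → Perm (Fin n) := fun i => wordProd n (l.take i)
  have hQ : ∃ i, (p i)⁻¹ b < (p i)⁻¹ a := ⟨l.length, by simpa [p, hwl] using hw⟩
  obtain ⟨i, hi⟩ : ∃ i, Nat.find hQ = i + 1 := Nat.exists_eq_succ_of_ne_zero fun h0 => by
    have := Nat.find_spec hQ
    rw [h0] at this
    exact absurd hab.le (by simpa [p] using this)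
  have hil : i < l.length := by have := Nat.find_min' hQ (m := l.length) (by simpa [p, hwl]); omega
  have hnot : ¬(p i)⁻¹ b < (p i)⁻¹ a := Nat.find_min hQ (by omega)
  have hnext : (p (i + 1))⁻¹ b < (p (i + 1))⁻¹ a := hi ▸ Nat.find_spec hQ
  obtain ⟨e, f, hef, hs⟩ := exists_simpleRefl_eq_swap (hl _ (List.getElem_mem hil))
  have hp : p (i + 1) = p i * swap e f := by
    simp only [p, ← List.take_concat_get' l i hil, wordProd_append, wordProd_cons, wordProd_nil,
      mul_one, hs]
  have hxy : (p i)⁻¹ a < (p i)⁻¹ b :=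
    lt_of_le_of_ne (not_lt.1 hnot) ((p i)⁻¹.injective.ne hab.ne)
  obtain ⟨hxe, hyf⟩ := eq_of_lt_of_swap_adjacent_apply_lt hef hxy (by simpa [hp] using hnext)
  have hconj : swap a b = p i * swap e f * (p i)⁻¹ := by
    rw [← swap_apply_apply, ← hxe, ← hyf]
    simp
  have hsplit : w = p (i + 1) * wordProd n (l.drop (i + 1)) := by
    conv_lhs => rw [← hwl, ← List.take_append_drop (i + 1) l, wordProd_append]
  refine ⟨i, hil, ?_⟩
  rw [List.eraseIdx_eq_take_drop_succ, wordProd_append, hsplit, hp, hconj]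
  simp [mul_assoc, p]

lemma len_swap_mul_lt_of_inv_lt {a b : Fin n} (hab : a < b) {w : Perm (Fin n)}
    (hw : w⁻¹ b < w⁻¹ a) : len n (swap a b * w) < len n w := by
  obtain ⟨l, hl, hwl⟩ := exists_isReduced w
  obtain ⟨i, hi, he⟩ := exists_swap_mul_eq_eraseIdx_of_inv_lt hab hw hl.1 hwl
  calc len n (swap a b * w) ≤ (l.eraseIdx i).length :=
        he ▸ len_le_length fun j hj => hl.1 j ((List.eraseIdx_sublist l i).mem hj)
    _ < l.length := by rw [List.length_eraseIdx_of_lt hi]; omega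
    _ = len n w := by rw [← hwl, hl.2]

lemma inv_lt_iff_len_swap_mul_lt {a b : Fin n} (hab : a < b) (w : Perm (Fin n)) :
    w⁻¹ b < w⁻¹ a ↔ len n (swap a b * w) < len n w := by
  refine ⟨len_swap_mul_lt_of_inv_lt hab, fun h => ?_⟩
  by_contra hba
  have hv : (swap a b * w)⁻¹ b < (swap a b * w)⁻¹ a := by
    simpa using lt_of_le_of_ne (not_lt.1 hba) (w⁻¹.injective.ne hab.ne)
  have := len_swap_mul_lt_of_inv_lt hab hv
  rw [swap_mul_self_mul] at this
  omega

lemma len_swap_mul_ne {a b : Fin n} (hab : a ≠ b) (w : Perm (Fin n)) :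
    len n (swap a b * w) ≠ len n w := by
  wlog hlt : a < b generalizing a b
  · rw [swap_comm]
    exact this hab.symm (lt_of_le_of_ne (not_lt.1 hlt) hab.symm)
  rcases lt_or_gt_of_ne (w⁻¹.injective.ne hab) with h | h
  · have := (inv_lt_iff_len_swap_mul_lt hlt (swap a b * w)).1 (by simpa using h)
    rw [swap_mul_self_mul] at this
    omega
  · exact ((inv_lt_iff_len_swap_mul_lt hlt w).1 h).ne

lemma exists_swap_mul_eq_eraseIdx {a b : Fin n} (hab : a ≠ b) {w : Perm (Fin n)}
    (h : len n (swap a b * w) < len n w) {l : List ℕ} (hl : IsWord n l)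
    (hwl : wordProd n l = w) : ∃ i < l.length, swap a b * w = wordProd n (l.eraseIdx i) := by
  wlog hlt : a < b generalizing a b
  · rw [swap_comm] at h ⊢
    exact this hab.symm h (lt_of_le_of_ne (not_lt.1 hlt) hab.symm)
  exact exists_swap_mul_eq_eraseIdx_of_inv_lt hlt
    ((inv_lt_iff_len_swap_mul_lt hlt w).2 h) hl hwl

lemma isSimpleIndex_of_len_lt {c : ℕ} {w : Perm (Fin n)}
    (h : len n w < len n (simpleRefl n c * w)) : IsSimpleIndex n c := by
  by_contra hc
  rw [simpleRefl_of_not_isSimpleIndex hc, one_mul] at h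
  exact lt_irrefl _ h

lemma len_simpleRefl_mul_le {c : ℕ} (hc : IsSimpleIndex n c) (w : Perm (Fin n)) :
    len n (simpleRefl n c * w) ≤ len n w + 1 := by
  obtain ⟨l, hl, rfl⟩ := exists_isReduced w
  calc len n (simpleRefl n c * wordProd n l) ≤ (c :: l).length := by
        rw [← wordProd_cons]
        exact len_le_length (List.forall_mem_cons.2 ⟨hc, hl.1⟩)
    _ = len n (wordProd n l) + 1 := by rw [hl.2, List.length_cons]

lemma len_simpleRefl_mul {c : ℕ} (hc : IsSimpleIndex n c) (w : Perm (Fin n)) :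
    len n (simpleRefl n c * w) = len n w + 1 ∨ len n (simpleRefl n c * w) + 1 = len n w := by
  obtain ⟨e, f, hef, hs⟩ := exists_simpleRefl_eq_swap hc
  have hne : len n (simpleRefl n c * w) ≠ len n w := by
    rw [hs]
    exact len_swap_mul_ne (fun h => by rw [h] at hef; omega) w
  have := len_simpleRefl_mul_le hc (simpleRefl n c * w)
  rw [simpleRefl_mul_simpleRefl_mul] at this
  have := len_simpleRefl_mul_le hc w
  omega

lemma len_simpleRefl_mul_of_lt {c : ℕ} {w : Perm (Fin n)}
    (h : len n w < len n (simpleRefl n c * w)) : len n (simpleRefl n c * w) = len n w + 1 := by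
  have := len_simpleRefl_mul (isSimpleIndex_of_len_lt h) w
  omega

lemma IsReduced.of_cons {c : ℕ} {l : List ℕ} (h : IsReduced n (c :: l)) : IsReduced n l := by
  have hl : IsWord n l := fun j hj => h.1 j (List.mem_cons_of_mem c hj)
  have h₁ := len_le_length hl
  have h₂ := len_simpleRefl_mul_le (h.1 c List.mem_cons_self) (wordProd n l)
  rw [← wordProd_cons, h.2, List.length_cons] at h₂
  exact ⟨hl, by omega⟩

lemma IsReduced.len_lt_cons {c : ℕ} {l : List ℕ} (h : IsReduced n (c :: l)) :
    len n (wordProd n l) < len n (simpleRefl n c * wordProd n l) := by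
  rw [← wordProd_cons, h.2, h.of_cons.2, List.length_cons]
  omega

/-- The left Demazure product `s_c * w = max {w, s_c w}`. -/
noncomputable def demStepLeft (n c : ℕ) (w : Perm (Fin n)) : Perm (Fin n) :=
  if len n w < len n (simpleRefl n c * w) then simpleRefl n c * w else w

lemma IsReduced.demStepLeft_wordProd {c : ℕ} {l : List ℕ} (h : IsReduced n (c :: l)) :
    demStepLeft n c (wordProd n l) = wordProd n (c :: l) := by
  rw [demStepLeft, if_pos h.len_lt_cons, wordProd_cons]

def ReflStep (n : ℕ) (x w : Perm (Fin n)) : Prop :=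
  ∃ a b : Fin n, a ≠ b ∧ w = swap a b * x ∧ len n w = len n x + 1

abbrev ReflChain (n : ℕ) : Perm (Fin n) → Perm (Fin n) → Prop :=
  Relation.ReflTransGen (ReflStep n)

lemma reflStep_simpleRefl_mul {c : ℕ} {w : Perm (Fin n)}
    (h : len n w < len n (simpleRefl n c * w)) : ReflStep n w (simpleRefl n c * w) := by
  obtain ⟨e, f, hef, hs⟩ := exists_simpleRefl_eq_swap (isSimpleIndex_of_len_lt h)
  exact ⟨e, f, fun h => by rw [h] at hef; omega, by rw [hs], len_simpleRefl_mul_of_lt h⟩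

lemma ReflStep.simpleRefl_mul {c : ℕ} {x w : Perm (Fin n)} (h : ReflStep n x w)
    (hx : len n x < len n (simpleRefl n c * x)) (hw : len n w < len n (simpleRefl n c * w)) :
    ReflStep n (simpleRefl n c * x) (simpleRefl n c * w) := by
  obtain ⟨a, b, hab, rfl, hlen⟩ := h
  refine ⟨simpleRefl n c a, simpleRefl n c b, (simpleRefl n c).injective.ne hab, ?_, ?_⟩
  · rw [swap_apply_apply, simpleRefl_inv]
    simp [mul_assoc]
  · rw [len_simpleRefl_mul_of_lt hx, len_simpleRefl_mul_of_lt hw, hlen]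

lemma ReflStep.simpleRefl_mul_eq {c : ℕ} {x w : Perm (Fin n)} (h : ReflStep n x w)
    (hx : len n x < len n (simpleRefl n c * x)) (hw : ¬len n w < len n (simpleRefl n c * w)) :
    simpleRefl n c * x = w := by
  obtain ⟨a, b, hab, rfl, hlen⟩ := h
  have hc := isSimpleIndex_of_len_lt hx
  have hw' := (len_simpleRefl_mul hc (swap a b * x)).resolve_left (by omega)
  -- erase a letter from a reduced word `c :: m` of `w = t x`; erasing any letter but `c`
  -- would make `s_c x` shorter than `x`
  obtain ⟨m, hm, hwm⟩ := exists_isReduced (simpleRefl n c * (swap a b * x))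
  have hcm : wordProd n (c :: m) = swap a b * x := by rw [wordProd_cons, hwm]; simp
  obtain ⟨i, hi, he⟩ := exists_swap_mul_eq_eraseIdx hab (by rw [swap_mul_self_mul]; omega)
    (List.forall_mem_cons.2 ⟨hc, hm.1⟩) hcm
  rw [swap_mul_self_mul] at he
  cases i with
  | zero => conv_lhs => rw [he, List.eraseIdx_cons_zero, hwm, simpleRefl_mul_simpleRefl_mul]
  | succ j =>
    rw [List.eraseIdx_cons_succ, wordProd_cons] at he
    have hj : j < m.length := by simpa using hi
    have := len_le_length (n := n) fun k hk => hm.1 k ((List.eraseIdx_sublist m j).mem hk)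
    rw [List.length_eraseIdx_of_lt hj, hm.2.symm, hwm, ← simpleRefl_mul_simpleRefl_mul c
      (wordProd n _), ← he] at this
    omega

lemma reflChain_demStepLeft (c : ℕ) (w : Perm (Fin n)) : ReflChain n w (demStepLeft n c w) := by
  unfold demStepLeft
  split_ifs with h
  · exact .single (reflStep_simpleRefl_mul h)
  · exact .refl

lemma reflChain_simpleRefl_mul_demStepLeft (c : ℕ) (w : Perm (Fin n)) :
    ReflChain n (simpleRefl n c * w) (demStepLeft n c w) := by
  unfold demStepLeft
  split_ifs with h
  · exact .refl
  by_cases hc : IsSimpleIndex n c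
  · have hdown := (len_simpleRefl_mul hc w).resolve_left (by omega)
    have := reflStep_simpleRefl_mul (c := c) (w := simpleRefl n c * w)
      (by rw [simpleRefl_mul_simpleRefl_mul]; omega)
    rw [simpleRefl_mul_simpleRefl_mul] at this
    exact .single this
  · rw [simpleRefl_of_not_isSimpleIndex hc, one_mul]

lemma ReflChain.simpleRefl_mul_demStepLeft_of_lt {c : ℕ} {u w : Perm (Fin n)}
    (h : ReflChain n u w) (hu : len n u < len n (simpleRefl n c * u)) :
    ReflChain n (simpleRefl n c * u) (demStepLeft n c w) := by
  induction h with
  | refl => rw [demStepLeft, if_pos hu]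
  | @tail x w _ hxw ih =>
    unfold demStepLeft at ih ⊢
    by_cases hw : len n w < len n (simpleRefl n c * w) <;>
      by_cases hx : len n x < len n (simpleRefl n c * x) <;>
      simp only [hw, hx, if_true, if_false] at ih ⊢
    · exact ih.tail (hxw.simpleRefl_mul hx hw)
    · exact (ih.tail hxw).tail (reflStep_simpleRefl_mul hw)
    · rwa [← hxw.simpleRefl_mul_eq hx hw]
    · exact ih.tail hxw

lemma ReflChain.simpleRefl_mul_demStepLeft {u w : Perm (Fin n)} (h : ReflChain n u w) (c : ℕ) :
    ReflChain n (simpleRefl n c * u) (demStepLeft n c w) := by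
  by_cases hu : len n u < len n (simpleRefl n c * u)
  · exact h.simpleRefl_mul_demStepLeft_of_lt hu
  have hu' : demStepLeft n c u = u := if_neg hu
  exact ((hu' ▸ reflChain_simpleRefl_mul_demStepLeft c u).trans h).trans
    (reflChain_demStepLeft c w)

lemma reflChain_wordProd_of_sublist {l' l : List ℕ} (h : l'.Sublist l) (hl : IsReduced n l) :
    ReflChain n (wordProd n l') (wordProd n l) := by
  induction h with
  | slnil => exact .refl
  | cons c _ ih =>
    rw [← hl.demStepLeft_wordProd]
    exact (ih hl.of_cons).trans (reflChain_demStepLeft c _)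
  | cons_cons c _ ih =>
    rw [← hl.demStepLeft_wordProd, wordProd_cons]
    exact (ih hl.of_cons).simpleRefl_mul_demStepLeft c

lemma ReflChain.exists_sublist {u w : Perm (Fin n)} (h : ReflChain n u w) {l : List ℕ}
    (hl : IsReduced n l) (hwl : wordProd n l = w) :
    ∃ l', l'.Sublist l ∧ IsReduced n l' ∧ wordProd n l' = u := by
  induction h generalizing l with
  | refl => exact ⟨l, .refl l, hl, hwl⟩
  | @tail x w _ hxw ih =>
    obtain ⟨a, b, hab, rfl, hlen⟩ := hxw
    obtain ⟨i, hi, he⟩ := exists_swap_mul_eq_eraseIdx hab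
      (by rw [swap_mul_self_mul]; omega) hl.1 hwl
    rw [swap_mul_self_mul] at he
    have hred : IsReduced n (l.eraseIdx i) :=
      ⟨fun j hj => hl.1 j ((List.eraseIdx_sublist l i).mem hj),
        by rw [← he, List.length_eraseIdx_of_lt hi, ← hl.2, hwl]; omega⟩
    obtain ⟨l', hsub, hred', hwl'⟩ := ih hred he.symm
    exact ⟨l', hsub.trans (List.eraseIdx_sublist l i), hred', hwl'⟩

theorem bruhatLE_iff_reflChain {u w : Perm (Fin n)} : bruhatLE n u w ↔ ReflChain n u w := by
  refine ⟨fun ⟨l, l', hl, hwl, hsub, _, hwl'⟩ => ?_, fun h => ?_⟩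
  · exact hwl ▸ hwl' ▸ reflChain_wordProd_of_sublist hsub hl
  · obtain ⟨l, hl, hwl⟩ := exists_isReduced w
    obtain ⟨l', hsub, hl', hwl'⟩ := h.exists_sublist hl hwl
    exact ⟨l, l', hl, hwl, hsub, hl', hwl'⟩

theorem bruhatLE_wordProd_iff {u : Perm (Fin n)} {l : List ℕ} (hl : IsReduced n l) :
    bruhatLE n u (wordProd n l) ↔ ∃ l', l'.Sublist l ∧ IsReduced n l' ∧ wordProd n l' = u :=
  ⟨fun h => (bruhatLE_iff_reflChain.1 h).exists_sublist hl rfl,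
    fun ⟨l', hsub, hl', hwl'⟩ => ⟨l, l', hl, rfl, hsub, hl', hwl'⟩⟩

lemma bruhatLE_refl (w : Perm (Fin n)) : bruhatLE n w w :=
  bruhatLE_iff_reflChain.2 .refl

lemma bruhatLE_trans {u v w : Perm (Fin n)} (huv : bruhatLE n u v) (hvw : bruhatLE n v w) :
    bruhatLE n u w :=
  bruhatLE_iff_reflChain.2 ((bruhatLE_iff_reflChain.1 huv).trans (bruhatLE_iff_reflChain.1 hvw))

lemma bruhatLE_antisymm {u w : Perm (Fin n)} (huw : bruhatLE n u w) (hwu : bruhatLE n w u) :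
    u = w := by
  obtain ⟨l, l', hl, rfl, hsub, hl', rfl⟩ := huw
  obtain ⟨m, m', hm, hwm, hsub', hm', hwm'⟩ := hwu
  have : l'.length = l.length := by
    have := hsub'.length_le
    rw [← hm.2, ← hm'.2, hwm, hwm', hl.2, hl'.2] at this
    exact le_antisymm hsub.length_le this
  rw [hsub.eq_of_length this]

lemma bruhatLE_one_iff {u : Perm (Fin n)} : bruhatLE n u 1 ↔ u = 1 := by
  have hnil : IsReduced n [] := ⟨nofun, Nat.le_zero.1 (len_le_length nofun)⟩
  rw [← wordProd_nil, bruhatLE_wordProd_iff hnil]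
  constructor
  · rintro ⟨l', hsub, -, rfl⟩
    rw [List.sublist_nil.1 hsub]
  · rintro rfl
    exact ⟨[], .refl [], hnil, rfl⟩

lemma bruhatLE_demStepLeft (c : ℕ) (w : Perm (Fin n)) : bruhatLE n w (demStepLeft n c w) :=
  bruhatLE_iff_reflChain.2 (reflChain_demStepLeft c w)

lemma simpleRefl_mul_bruhatLE_demStepLeft {u w : Perm (Fin n)} (h : bruhatLE n u w) (c : ℕ) :
    bruhatLE n (simpleRefl n c * u) (demStepLeft n c w) :=
  bruhatLE_iff_reflChain.2 ((bruhatLE_iff_reflChain.1 h).simpleRefl_mul_demStepLeft c)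

lemma bruhatLE_wordProd_cons_iff {u : Perm (Fin n)} {c : ℕ} {l : List ℕ}
    (hl : IsReduced n (c :: l)) :
    bruhatLE n u (wordProd n (c :: l)) ↔
      bruhatLE n u (wordProd n l) ∨ ∃ u', bruhatLE n u' (wordProd n l) ∧ u = simpleRefl n c * u' := by
  constructor
  · rw [bruhatLE_wordProd_iff hl]
    rintro ⟨l', hsub, hl', rfl⟩
    rcases List.sublist_cons_iff.1 hsub with hsub | ⟨r, rfl, hr⟩
    · exact .inl ((bruhatLE_wordProd_iff hl.of_cons).2 ⟨l', hsub, hl', rfl⟩)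
    · exact .inr ⟨wordProd n r, (bruhatLE_wordProd_iff hl.of_cons).2 ⟨r, hr, hl'.of_cons, rfl⟩,
        wordProd_cons c r⟩
  · rw [← hl.demStepLeft_wordProd]
    rintro (h | ⟨u', h, rfl⟩)
    · exact bruhatLE_trans h (bruhatLE_demStepLeft c _)
    · exact simpleRefl_mul_bruhatLE_demStepLeft h c

def intervalProd (n : ℕ) (σ w : Perm (Fin n)) : Set (Perm (Fin n)) :=
  {x | ∃ u v, bruhatLE n u σ ∧ bruhatLE n v w ∧ x = u * v}

lemma IsBruhatGreatest.unique {K : Set (Perm (Fin n))} {m₁ m₂ : Perm (Fin n)}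
    (h₁ : IsBruhatGreatest n K m₁) (h₂ : IsBruhatGreatest n K m₂) : m₁ = m₂ :=
  bruhatLE_antisymm (h₂.2 _ h₁.1) (h₁.2 _ h₂.1)

lemma demMul_eq_of_isBruhatGreatest {σ w m : Perm (Fin n)}
    (h : IsBruhatGreatest n (intervalProd n σ w) m) : demMul n σ w = m := by
  have hex : ∃ m, IsBruhatGreatest n (intervalProd n σ w) m := ⟨m, h⟩
  exact (dif_pos hex).trans (hex.choose_spec.unique h)

lemma exists_isBruhatGreatest_intervalProd {l : List ℕ} (hl : IsReduced n l)
    (w : Perm (Fin n)) : ∃ u₀, bruhatLE n u₀ (wordProd n l) ∧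
      IsBruhatGreatest n (intervalProd n (wordProd n l) w) (u₀ * w) := by
  induction l with
  | nil =>
    refine ⟨1, bruhatLE_refl 1, ⟨1, w, bruhatLE_refl 1, bruhatLE_refl w, rfl⟩, ?_⟩
    rintro _ ⟨u, v, hu, hv, rfl⟩
    rw [wordProd_nil, bruhatLE_one_iff] at hu
    simpa [hu] using hv
  | cons c l ih =>
    obtain ⟨u₀, hu₀, -, hmax⟩ := ih hl.of_cons
    -- the greatest element of `I(s_c σ) I(w) = I(σ) I(w) ∪ s_c I(σ) I(w)` is `s_c * (u₀ w)`
    have hupper : ∀ x ∈ intervalProd n (wordProd n (c :: l)) w,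
        bruhatLE n x (demStepLeft n c (u₀ * w)) := by
      rintro _ ⟨u, v, hu, hv, rfl⟩
      rcases (bruhatLE_wordProd_cons_iff hl).1 hu with hu | ⟨u', hu', rfl⟩
      · exact bruhatLE_trans (hmax _ ⟨u, v, hu, hv, rfl⟩) (bruhatLE_demStepLeft c _)
      · rw [mul_assoc]
        exact simpleRefl_mul_bruhatLE_demStepLeft (hmax _ ⟨u', v, hu', hv, rfl⟩) c
    by_cases hup : len n (u₀ * w) < len n (simpleRefl n c * (u₀ * w))
    · have hu₁ := (bruhatLE_wordProd_cons_iff hl).2 (.inr ⟨u₀, hu₀, rfl⟩)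
      refine ⟨simpleRefl n c * u₀, hu₁, ⟨_, w, hu₁, bruhatLE_refl w, rfl⟩, ?_⟩
      simpa [demStepLeft, hup, mul_assoc] using hupper
    · have hu₁ := (bruhatLE_wordProd_cons_iff hl).2 (.inl hu₀)
      refine ⟨u₀, hu₁, ⟨u₀, w, hu₁, bruhatLE_refl w, rfl⟩, ?_⟩
      simpa [demStepLeft, hup] using hupper

theorem isBruhatGreatest_interval_mul_general (n : ℕ) (σ w : Equiv.Perm (Fin n)) :
    IsBruhatGreatest n {x | ∃ u, bruhatLE n u σ ∧ x = u * w} (demMul n σ w) := by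
  obtain ⟨l, hl, rfl⟩ := exists_isReduced σ
  obtain ⟨u₀, hu₀, hg⟩ := exists_isBruhatGreatest_intervalProd hl w
  rw [demMul_eq_of_isBruhatGreatest hg]
  exact ⟨⟨u₀, hu₀, rfl⟩, fun _ ⟨u, hu, hx⟩ => hg.2 _ ⟨u, w, hu, bruhatLE_refl w, hx⟩⟩

/-- For `σ, w ∈ S_n`, the set `I(σ)w = {uw : u ≤ σ}` has a unique
maximal (greatest) element in the Bruhat order, namely the Demazure product `σ * w`. -/
theorem isBruhatGreatest_interval_mul (n : ℕ) (hn : 1 ≤ n) (σ w : Equiv.Perm (Fin n)) :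
    IsBruhatGreatest n {x | ∃ u, bruhatLE n u σ ∧ x = u * w} (demMul n σ w) :=
  isBruhatGreatest_interval_mul_general n σ w

end KK
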